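/- The limit of the ε-distinguishability ratio as ε → 0⁺ equals the distinguishability ratio: lim_{ε→0} μ_{ρ,M}(ε) = inf_{σ ≠ ρ} ‖ρ − σ‖_M / ‖ρ − σ‖₁, where μ_{ρ,M}(ε) = (1/(2ε)) min{ ‖ρ − σ‖_M : ‖ρ − σ‖₁ ≥ 2ε }. -/

import Mathlib

open Matrix
open scoped ComplexOrder

namespace QSVQDH

variable {d : ℕ}

/-- Schatten 1-norm (trace norm). -/
noncomputable def trNorm (A : Matrix (Fin d) (Fin d) ℂ) : ℝ :=
  ((Matrix.posSemidef_conjTranspose_mul_self A).1.eigenvectorUnitary.1 *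
    diagonal (((↑) : ℝ → ℂ) ∘ Real.sqrt ∘ (Matrix.posSemidef_conjTranspose_mul_self A).1.eigenvalues) *
    (star (Matrix.posSemidef_conjTranspose_mul_self A).1.eigenvectorUnitary :
      Matrix (Fin d) (Fin d) ℂ)).trace.re

/-- Schatten 2-norm (Hilbert–Schmidt norm). -/
noncomputable def hsNorm (A : Matrix (Fin d) (Fin d) ℂ) : ℝ :=
  Real.sqrt ((Aᴴ * A).trace.re)

/-- Operator norm. -/
noncomputable def opNorm (A : Matrix (Fin d) (Fin d) ℂ) : ℝ :=
  ‖Matrix.toEuclideanCLM (𝕜 := ℂ) A‖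

/-- Density operator: positive semidefinite with unit trace. -/
def IsDensity (ρ : Matrix (Fin d) (Fin d) ℂ) : Prop := ρ.PosSemidef ∧ ρ.trace = 1

/-- POVM element: 0 ≤ M ≤ I. -/
def IsPOVMElem (M : Matrix (Fin d) (Fin d) ℂ) : Prop := M.PosSemidef ∧ (1 - M).PosSemidef

/-- A measurement class of binary effects: contains 0, consists of POVM elements,
is convex, and is closed under M ↦ I − M. -/
def IsMClass (Mset : Set (Matrix (Fin d) (Fin d) ℂ)) : Prop :=
  0 ∈ Mset ∧ (∀ M ∈ Mset, IsPOVMElem M) ∧ Convex ℝ Mset ∧ (∀ M ∈ Mset, 1 - M ∈ Mset)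

/-- The M-seminorm ‖Δ‖_M = sup_{M ∈ Mset} (2 tr(MΔ) − tr Δ). -/
noncomputable def Mnorm (Mset : Set (Matrix (Fin d) (Fin d) ℂ))
    (Δ : Matrix (Fin d) (Fin d) ℂ) : ℝ :=
  sSup ((fun M => 2 * (M * Δ).trace.re - Δ.trace.re) '' Mset)

/-- The ε-distinguishability ratio μ_{ρ,M}(ε). -/
noncomputable def mu (Mset : Set (Matrix (Fin d) (Fin d) ℂ))
    (ρ : Matrix (Fin d) (Fin d) ℂ) (ε : ℝ) : ℝ :=
  (1 / (2 * ε)) *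
    sInf ((fun σ => Mnorm Mset (ρ - σ)) '' {σ | IsDensity σ ∧ 2 * ε ≤ trNorm (ρ - σ)})

/-- The ε-visibility γ_{V,M}(ε), where the subspace V is given by its
orthogonal projector P. -/
noncomputable def gamma (Mset : Set (Matrix (Fin d) (Fin d) ℂ))
    (P : Matrix (Fin d) (Fin d) ℂ) (ε : ℝ) : ℝ :=
  (1 / ε) * sSup ((fun Ω =>
      sInf ((fun p : Matrix (Fin d) (Fin d) ℂ × Matrix (Fin d) (Fin d) ℂ =>
          (Ω * (p.1 - p.2)).trace.re) ''
        {p | IsDensity p.1 ∧ P * p.1 = p.1 ∧ IsDensity p.2 ∧ (p.2 * P).trace.re ≤ 1 - ε}))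
    '' Mset)

/-- The ε-visibility in its minimax (minimum) form. -/
noncomputable def gammaMin (Mset : Set (Matrix (Fin d) (Fin d) ℂ))
    (P : Matrix (Fin d) (Fin d) ℂ) (ε : ℝ) : ℝ :=
  sInf ((fun p : Matrix (Fin d) (Fin d) ℂ × Matrix (Fin d) (Fin d) ℂ =>
      (1 / (2 * ε)) * Mnorm Mset (p.1 - p.2)) ''
    {p | IsDensity p.1 ∧ P * p.1 = p.1 ∧ IsDensity p.2 ∧ (p.2 * P).trace.re ≤ 1 - ε})

/-- μ_{ρ,M}(1), defined through perfectly distinguishable (orthogonal) counterparts. -/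
noncomputable def muone (Mset : Set (Matrix (Fin d) (Fin d) ℂ))
    (ρ : Matrix (Fin d) (Fin d) ℂ) : ℝ :=
  (1 / 2) * sInf ((fun σ => Mnorm Mset (ρ - σ)) '' {σ | IsDensity σ ∧ (ρ * σ).trace = 0})

/-- The distinguishability ratio μ̂_{ρ,M}. -/
noncomputable def muhat (Mset : Set (Matrix (Fin d) (Fin d) ℂ))
    (ρ : Matrix (Fin d) (Fin d) ℂ) : ℝ :=
  sInf ((fun σ => Mnorm Mset (ρ - σ) / trNorm (ρ - σ)) '' {σ | IsDensity σ ∧ σ ≠ ρ})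

open Filter Topology
open scoped Pointwise

/-! Both the `M`-norm and the trace norm are positively homogeneous, and the states form a convex
set. So sliding `ρ` towards any state `σ ≠ ρ` until the trace distance is exactly `2ε` leaves the
ratio `‖ρ - σ‖_M / ‖ρ - σ‖₁` unchanged, whence `μ(ε)` is at most that ratio as soon as
`2ε ≤ ‖ρ - σ‖₁`. Conversely every competitor in `μ(ε)` is at trace distance at least `2ε` from `ρ`,
so `μ(ε) ≥ μ̂` for all `ε > 0`. -/

lemma trNorm_eq_sum_sqrt_eigenvalues (A : Matrix (Fin d) (Fin d) ℂ) :
    trNorm A = ∑ i, √((posSemidef_conjTranspose_mul_self A).1.eigenvalues i) := by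
  rw [trNorm, trace_mul_cycle, Unitary.coe_star_mul_self, one_mul, trace_diagonal, Complex.re_sum]
  simp

lemma trNorm_eq_trace_cfc_sqrt (A : Matrix (Fin d) (Fin d) ℂ) :
    trNorm A = (cfc Real.sqrt (Aᴴ * A)).trace.re := by
  rw [(posSemidef_conjTranspose_mul_self A).1.cfc_eq, IsHermitian.cfc, Unitary.conjStarAlgAut_apply]
  rfl

lemma trNorm_zero : trNorm (0 : Matrix (Fin d) (Fin d) ℂ) = 0 := by
  simp [trNorm_eq_trace_cfc_sqrt]

lemma trNorm_nonneg (A : Matrix (Fin d) (Fin d) ℂ) : 0 ≤ trNorm A := by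
  rw [trNorm_eq_sum_sqrt_eigenvalues]
  exact Finset.sum_nonneg fun i _ => Real.sqrt_nonneg _

lemma trNorm_pos {A : Matrix (Fin d) (Fin d) ℂ} (hA : A ≠ 0) : 0 < trNorm A := by
  refine (trNorm_nonneg A).lt_of_ne fun h => hA ?_
  rw [trNorm_eq_sum_sqrt_eigenvalues] at h
  have hsqrt := (Finset.sum_eq_zero_iff_of_nonneg fun i _ => Real.sqrt_nonneg _).mp h.symm
  refine conjTranspose_mul_self_eq_zero.mp <|
    (posSemidef_conjTranspose_mul_self A).1.eigenvalues_eq_zero_iff.mp <| funext fun i => ?_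
  exact (Real.sqrt_eq_zero (eigenvalues_conjTranspose_mul_self_nonneg A i)).mp
    (hsqrt i (Finset.mem_univ i))

lemma trNorm_smul (A : Matrix (Fin d) (Fin d) ℂ) {t : ℝ} (ht : 0 ≤ t) :
    trNorm (t • A) = t * trNorm A := by
  have hsa : IsSelfAdjoint (Aᴴ * A) := (posSemidef_conjTranspose_mul_self A).1
  have hsq : (t • A)ᴴ * (t • A) = t ^ 2 • (Aᴴ * A) := by
    rw [conjTranspose_smul, star_trivial, smul_mul_smul, sq]
  have hsqrt : (fun x : ℝ => √(t ^ 2 • x)) = fun x => t * √x := by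
    funext x
    rw [smul_eq_mul, Real.sqrt_mul (sq_nonneg t), Real.sqrt_sq ht]
  rw [trNorm_eq_trace_cfc_sqrt, trNorm_eq_trace_cfc_sqrt, hsq,
    ← cfc_comp_smul (t ^ 2) Real.sqrt (Aᴴ * A) (ha := hsa), hsqrt,
    cfc_const_mul t Real.sqrt (Aᴴ * A), trace_smul, Complex.smul_re, smul_eq_mul]

lemma Mnorm_nonneg {Mset : Set (Matrix (Fin d) (Fin d) ℂ)} (h0 : 0 ∈ Mset)
    {Δ : Matrix (Fin d) (Fin d) ℂ} (hΔ : Δ.trace.re = 0) : 0 ≤ Mnorm Mset Δ := by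
  by_cases hb : BddAbove ((fun M => 2 * (M * Δ).trace.re - Δ.trace.re) '' Mset)
  · exact le_csSup hb ⟨0, h0, by simp [hΔ]⟩
  · rw [Mnorm, Real.sSup_of_not_bddAbove hb]

lemma Mnorm_smul (Mset : Set (Matrix (Fin d) (Fin d) ℂ)) (Δ : Matrix (Fin d) (Fin d) ℂ)
    {t : ℝ} (ht : 0 ≤ t) : Mnorm Mset (t • Δ) = t * Mnorm Mset Δ := by
  have himage : (fun M => 2 * (M * (t • Δ)).trace.re - (t • Δ).trace.re) '' Mset
      = t • (fun M => 2 * (M * Δ).trace.re - Δ.trace.re) '' Mset := by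
    rw [← Set.image_smul, Set.image_image]
    refine Set.image_congr fun M _ => ?_
    simp only [Matrix.mul_smul, trace_smul, Complex.smul_re, smul_eq_mul]
    ring
  rw [Mnorm, Mnorm, himage, Real.sSup_smul_of_nonneg ht, smul_eq_mul]

lemma convex_setOf_isDensity : Convex ℝ {σ : Matrix (Fin d) (Fin d) ℂ | IsDensity σ} := by
  rintro ρ ⟨hρ, hρ1⟩ σ ⟨hσ, hσ1⟩ a b ha hb hab
  refine ⟨(hρ.smul ha).add (hσ.smul hb), ?_⟩
  rw [trace_add, trace_smul, trace_smul, hρ1, hσ1, ← add_smul, hab, one_smul]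

lemma IsDensity.trace_re_sub_eq_zero {ρ σ : Matrix (Fin d) (Fin d) ℂ} (hρ : IsDensity ρ)
    (hσ : IsDensity σ) : (ρ - σ).trace.re = 0 := by
  rw [trace_sub, hρ.2, hσ.2, sub_self, Complex.zero_re]

section Ratio

variable {Mset : Set (Matrix (Fin d) (Fin d) ℂ)} {ρ σ : Matrix (Fin d) (Fin d) ℂ} {ε : ℝ}

lemma Mnorm_sub_nonneg (h0 : 0 ∈ Mset) (hρ : IsDensity ρ) (hσ : IsDensity σ) :
    0 ≤ Mnorm Mset (ρ - σ) :=
  Mnorm_nonneg h0 (hρ.trace_re_sub_eq_zero hσ)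

lemma muhat_nonneg (h0 : 0 ∈ Mset) (hρ : IsDensity ρ) : 0 ≤ muhat Mset ρ :=
  Real.sInf_nonneg <| by
    rintro _ ⟨σ, ⟨hσ, -⟩, rfl⟩
    exact div_nonneg (Mnorm_sub_nonneg h0 hρ hσ) (trNorm_nonneg _)

lemma muhat_le (h0 : 0 ∈ Mset) (hρ : IsDensity ρ) (hσ : IsDensity σ) (hσρ : σ ≠ ρ) :
    muhat Mset ρ ≤ Mnorm Mset (ρ - σ) / trNorm (ρ - σ) := by
  refine csInf_le ⟨0, ?_⟩ ⟨σ, ⟨hσ, hσρ⟩, rfl⟩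
  rintro _ ⟨τ, ⟨hτ, -⟩, rfl⟩
  exact div_nonneg (Mnorm_sub_nonneg h0 hρ hτ) (trNorm_nonneg _)

lemma muhat_le_mu (h0 : 0 ∈ Mset) (hρ : IsDensity ρ) (hε : 0 < ε)
    (hσ : IsDensity σ) (hσε : 2 * ε ≤ trNorm (ρ - σ)) : muhat Mset ρ ≤ mu Mset ρ ε := by
  rw [mu, one_div, ← div_eq_inv_mul, le_div_iff₀ (by positivity)]
  refine le_csInf ⟨_, σ, ⟨hσ, hσε⟩, rfl⟩ ?_
  rintro _ ⟨τ, ⟨hτ, hτε⟩, rfl⟩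
  have hτρ : τ ≠ ρ := by
    rintro rfl
    rw [sub_self, trNorm_zero] at hτε
    linarith
  calc muhat Mset ρ * (2 * ε) ≤ muhat Mset ρ * trNorm (ρ - τ) :=
        mul_le_mul_of_nonneg_left hτε (muhat_nonneg h0 hρ)
    _ ≤ Mnorm Mset (ρ - τ) := (le_div_iff₀ (by linarith)).1 (muhat_le h0 hρ hτ hτρ)

lemma mu_le_div (h0 : 0 ∈ Mset) (hρ : IsDensity ρ) (hσ : IsDensity σ) (hε : 0 < ε)
    (hσε : 2 * ε ≤ trNorm (ρ - σ)) :
    mu Mset ρ ε ≤ Mnorm Mset (ρ - σ) / trNorm (ρ - σ) := by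
  have hpos : 0 < trNorm (ρ - σ) := by linarith
  set t := 2 * ε / trNorm (ρ - σ) with ht
  have ht0 : 0 ≤ t := by positivity
  have hτ : IsDensity (ρ + t • (σ - ρ)) :=
    convex_setOf_isDensity.add_smul_sub_mem hρ hσ ⟨ht0, (div_le_one hpos).2 hσε⟩
  have hsub : ρ - (ρ + t • (σ - ρ)) = t • (ρ - σ) := by
    rw [sub_add_cancel_left, ← smul_neg, neg_sub]
  have hbdd : BddBelow ((fun τ => Mnorm Mset (ρ - τ)) ''
      {τ | IsDensity τ ∧ 2 * ε ≤ trNorm (ρ - τ)}) := by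
    refine ⟨0, ?_⟩
    rintro _ ⟨τ, ⟨hτ, -⟩, rfl⟩
    exact Mnorm_sub_nonneg h0 hρ hτ
  have hdist : trNorm (ρ - (ρ + t • (σ - ρ))) = 2 * ε := by
    rw [hsub, trNorm_smul _ ht0, ht, div_mul_cancel₀ _ hpos.ne']
  calc mu Mset ρ ε ≤ 1 / (2 * ε) * Mnorm Mset (ρ - (ρ + t • (σ - ρ))) :=
        mul_le_mul_of_nonneg_left (csInf_le hbdd ⟨_, ⟨hτ, hdist.ge⟩, rfl⟩) (by positivity)
    _ = Mnorm Mset (ρ - σ) / trNorm (ρ - σ) := by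
        rw [hsub, Mnorm_smul _ _ ht0, ht]
        field_simp

end Ratio

/-- lim_{ε→0⁺} μ_{ρ,M}(ε) = inf_{σ ≠ ρ} ‖ρ−σ‖_M / ‖ρ−σ‖₁. -/
theorem mu_tendsto_muhat (Mset : Set (Matrix (Fin d) (Fin d) ℂ)) (hM : IsMClass Mset)
    (ρ : Matrix (Fin d) (Fin d) ℂ) (hρ : IsDensity ρ)
    (hex : ∃ σ, IsDensity σ ∧ σ ≠ ρ) :
    Filter.Tendsto (fun ε => mu Mset ρ ε) (nhdsWithin 0 (Set.Ioi 0))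
      (nhds (sInf ((fun σ => Mnorm Mset (ρ - σ) / trNorm (ρ - σ)) ''
        {σ | IsDensity σ ∧ σ ≠ ρ}))) := by
  change Tendsto (mu Mset ρ) (𝓝[>] 0) (𝓝 (muhat Mset ρ))
  have eventually_close {σ} (hσ : σ ≠ ρ) : ∀ᶠ ε in 𝓝[>] (0 : ℝ),
      0 < ε ∧ 2 * ε ≤ trNorm (ρ - σ) := by
    filter_upwards [Ioo_mem_nhdsGT (half_pos (trNorm_pos (sub_ne_zero.2 hσ.symm)))]
      with ε hε using ⟨hε.1, by linarith [hε.2]⟩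
  refine tendsto_order.2 ⟨fun a ha => ?_, fun b hb => ?_⟩
  · obtain ⟨σ, hσ, hσρ⟩ := hex
    filter_upwards [eventually_close hσρ] with ε hε
    exact ha.trans_le (muhat_le_mu hM.1 hρ hε.1 hσ hε.2)
  · obtain ⟨_, ⟨σ, ⟨hσ, hσρ⟩, rfl⟩, hσb⟩ := exists_lt_of_csInf_lt (Set.image_nonempty.2 hex) hb
    filter_upwards [eventually_close hσρ] with ε hε
    exact (mu_le_div hM.1 hρ hσ hε.1 hε.2).trans_lt hσb

end QSVQDH
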